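/- Let γ̃ > 0 with γ̃ ≠ (n−1)/2. A brane scale function f is of class (B) with constant γ̃ (i.e. the limit lim_{τ→0⁻} f′(τ)²·e^{2γ̃f(τ)} exists and is a positive real number) if and only if γ̃ = n + ω₀ − 1 and ω₀ > −(n−1)/2. In that case the mass equals m̃ = (κ²/n²)·ρ₀², and the tension σ ∈ ℝ is arbitrary. -/

import Mathlib

/-!
With `x = f τ → -∞`, the Friedmann equation writes `f'² e^{2γf}` as a sum of exponentials in
`x`: `m e^{(2γ-n+1)x}`, terms of order `e^{2γx}`, and the density term
`(κ/n)² (σ e^{(γ+1)x} + ρ₀ e^{(γ+1-n-ω₀)x - μ̃(x)})²`. The density term tends to `+∞`,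
`(κρ₀/n)²` or `0` according as `γ + 1` is `<`, `=` or `> n + ω₀`, and the mass term to `+∞` or
`0` according as `2γ < n - 1` or `2γ > n - 1`. Hence a finite positive limit occurs exactly
when `γ = n + ω₀ - 1` and `2γ > n - 1`.
-/

open Filter Real Topology

section Asymptotics

variable {μ : ℝ → ℝ} {s β σ ρ₀ : ℝ}

lemma tendsto_exp_mul_atBot_nhds_zero (hs : 0 < s) :
    Tendsto (fun x => exp (s * x)) atBot (𝓝 0) :=
  tendsto_exp_comp_nhds_zero.2 (tendsto_id.const_mul_atBot hs)

lemma tendsto_exp_mul_atBot_atTop (hs : s < 0) :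
    Tendsto (fun x => exp (s * x)) atBot atTop :=
  tendsto_exp_comp_atTop.2 (tendsto_id.const_mul_atBot_of_neg hs)

lemma tendsto_add_exp_sub_of_eq_zero (hs : 0 < s) (hμ : Tendsto μ atBot (𝓝 0)) (hβ : β = 0) :
    Tendsto (fun x => σ * exp (s * x) + ρ₀ * exp (β * x - μ x)) atBot (𝓝 ρ₀) := by
  subst hβ
  have hexp : Tendsto (fun x => exp (0 * x - μ x)) atBot (𝓝 1) := by
    simpa [Function.comp_def] using (continuous_exp.tendsto _).comp hμ.neg
  simpa using ((tendsto_exp_mul_atBot_nhds_zero hs).const_mul σ).add (hexp.const_mul ρ₀)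

lemma tendsto_add_exp_sub_of_pos (hs : 0 < s) (hμ : Tendsto μ atBot (𝓝 0)) (hβ : 0 < β) :
    Tendsto (fun x => σ * exp (s * x) + ρ₀ * exp (β * x - μ x)) atBot (𝓝 0) := by
  have hexp : Tendsto (fun x => exp (β * x - μ x)) atBot (𝓝 0) :=
    tendsto_exp_comp_nhds_zero.2 ((tendsto_id.const_mul_atBot hβ).atBot_add hμ.neg)
  simpa using ((tendsto_exp_mul_atBot_nhds_zero hs).const_mul σ).add (hexp.const_mul ρ₀)

lemma tendsto_add_exp_sub_of_neg (hs : 0 < s) (hμ : Tendsto μ atBot (𝓝 0)) (hβ : β < 0)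
    (hρ₀ : 0 < ρ₀) :
    Tendsto (fun x => σ * exp (s * x) + ρ₀ * exp (β * x - μ x)) atBot atTop := by
  have hexp : Tendsto (fun x => exp (β * x - μ x)) atBot atTop :=
    tendsto_exp_comp_atTop.2 ((tendsto_id.const_mul_atBot_of_neg hβ).atTop_add hμ.neg)
  exact ((tendsto_exp_mul_atBot_nhds_zero hs).const_mul σ).add_atTop (hexp.const_mul_atTop hρ₀)

end Asymptotics

/-- The right-hand side of the modified Friedmann equation at `x = f τ`, where
`c = 2Λ/(n(n+1))`, `C = κ²/n²`, `ν = n - 1` and `p = n + ω₀`. -/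
noncomputable def friedmannRHS (m c κt C σ ρ₀ ν p : ℝ) (μ : ℝ → ℝ) (x : ℝ) : ℝ :=
  m * exp (-ν * x) + c * exp (2 * x) - κt + C * (σ + ρ₀ * exp (-p * x - μ x)) ^ 2 * exp (2 * x)

section RescaledFriedmann

variable {m c κt C σ ρ₀ ν p γ : ℝ} {μ : ℝ → ℝ}

lemma friedmannRHS_mul_exp (x : ℝ) :
    friedmannRHS m c κt C σ ρ₀ ν p μ x * exp (2 * γ * x)
      = m * exp ((2 * γ - ν) * x) + (c * exp ((2 * γ + 2) * x) - κt * exp (2 * γ * x)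
        + C * (σ * exp ((γ + 1) * x) + ρ₀ * exp ((γ + 1 - p) * x - μ x)) ^ 2) := by
  have hexp_add : ∀ u v : ℝ, exp ((u + v) * x) = exp (u * x) * exp (v * x) := fun u v => by
    rw [← exp_add, add_mul]
  have hdensity : exp ((γ + 1 - p) * x - μ x) = exp (-p * x - μ x) * exp ((γ + 1) * x) := by
    rw [← exp_add]; ring_nf
  have hsq : exp ((γ + 1) * x) ^ 2 = exp (2 * x) * exp (2 * γ * x) := by
    rw [← exp_add, sq, ← exp_add]; ring_nf
  rw [sub_eq_add_neg (2 * γ), add_comm (2 * γ), hexp_add, add_comm (2 * γ), hexp_add, hdensity]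
  unfold friedmannRHS
  linear_combination (-C * (σ + ρ₀ * exp (-p * x - μ x)) ^ 2) * hsq

lemma tendsto_curvature_terms (hγ : 0 < γ) :
    Tendsto (fun x => c * exp ((2 * γ + 2) * x) - κt * exp (2 * γ * x)) atBot (𝓝 0) := by
  simpa using ((tendsto_exp_mul_atBot_nhds_zero (by linarith : 0 < 2 * γ + 2)).const_mul c).sub
    ((tendsto_exp_mul_atBot_nhds_zero (by linarith : 0 < 2 * γ)).const_mul κt)

lemma tendsto_friedmannRHS_mul_exp_of_add_one_eq (hγ : 0 < γ) (hμ : Tendsto μ atBot (𝓝 0))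
    (hp : γ + 1 = p) (hν : ν < 2 * γ) :
    Tendsto (fun x => friedmannRHS m c κt C σ ρ₀ ν p μ x * exp (2 * γ * x)) atBot
      (𝓝 (C * ρ₀ ^ 2)) := by
  simp_rw [friedmannRHS_mul_exp]
  simpa using ((tendsto_exp_mul_atBot_nhds_zero (by linarith : 0 < 2 * γ - ν)).const_mul m).add
    ((tendsto_curvature_terms hγ).add
      (((tendsto_add_exp_sub_of_eq_zero (by linarith) hμ (by linarith)).pow 2).const_mul C))

lemma tendsto_friedmannRHS_mul_exp_zero_of_lt_add_one (hγ : 0 < γ) (hμ : Tendsto μ atBot (𝓝 0))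
    (hp : p < γ + 1) (hν : ν < 2 * γ) :
    Tendsto (fun x => friedmannRHS m c κt C σ ρ₀ ν p μ x * exp (2 * γ * x)) atBot (𝓝 0) := by
  simp_rw [friedmannRHS_mul_exp]
  simpa using ((tendsto_exp_mul_atBot_nhds_zero (by linarith : 0 < 2 * γ - ν)).const_mul m).add
    ((tendsto_curvature_terms hγ).add
      (((tendsto_add_exp_sub_of_pos (by linarith) hμ (by linarith)).pow 2).const_mul C))

lemma tendsto_friedmannRHS_mul_exp_atTop_of_two_mul_lt (hm : 0 < m) (hγ : 0 < γ) {L : ℝ}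
    (hdensity : Tendsto (fun x => σ * exp ((γ + 1) * x) + ρ₀ * exp ((γ + 1 - p) * x - μ x))
      atBot (𝓝 L))
    (hν : 2 * γ < ν) :
    Tendsto (fun x => friedmannRHS m c κt C σ ρ₀ ν p μ x * exp (2 * γ * x)) atBot atTop := by
  simp_rw [friedmannRHS_mul_exp]
  exact ((tendsto_exp_mul_atBot_atTop (by linarith : 2 * γ - ν < 0)).const_mul_atTop hm).atTop_add
    ((tendsto_curvature_terms hγ).add ((hdensity.pow 2).const_mul C))

lemma tendsto_friedmannRHS_mul_exp_atTop_of_add_one_lt (hm : 0 ≤ m) (hC : 0 < C) (hρ₀ : 0 < ρ₀)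
    (hγ : 0 < γ) (hμ : Tendsto μ atBot (𝓝 0)) (hp : γ + 1 < p) :
    Tendsto (fun x => friedmannRHS m c κt C σ ρ₀ ν p μ x * exp (2 * γ * x)) atBot atTop := by
  have hdensity := ((tendsto_pow_atTop two_ne_zero).comp
    (tendsto_add_exp_sub_of_neg (s := γ + 1) (σ := σ) (by linarith) hμ
      (by linarith : γ + 1 - p < 0) hρ₀)).const_mul_atTop hC
  refine tendsto_atTop_mono (fun x => ?_)
    ((tendsto_curvature_terms (c := c) (κt := κt) hγ).add_atTop hdensity)
  rw [friedmannRHS_mul_exp]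
  have := mul_nonneg hm (exp_pos ((2 * γ - ν) * x)).le
  simp only [Function.comp_apply]
  linarith

lemma exists_pos_tendsto_friedmannRHS_mul_exp_iff {α : Type*} {l : Filter α} [l.NeBot]
    {g : α → ℝ} (hg : Tendsto g l atBot) (hm : 0 < m) (hC : 0 < C) (hρ₀ : 0 < ρ₀) (hγ : 0 < γ)
    (hμ : Tendsto μ atBot (𝓝 0)) (hν : 2 * γ ≠ ν) :
    (∃ L, 0 < L ∧
        Tendsto (fun t => friedmannRHS m c κt C σ ρ₀ ν p μ (g t) * exp (2 * γ * g t)) l (𝓝 L))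
      ↔ γ + 1 = p ∧ ν < 2 * γ := by
  refine ⟨fun ⟨L, hL, hlim⟩ => ?_, fun ⟨hp, hν'⟩ =>
    ⟨C * ρ₀ ^ 2, by positivity, (tendsto_friedmannRHS_mul_exp_of_add_one_eq hγ hμ hp hν').comp hg⟩⟩
  have not_atTop : ¬ Tendsto (fun x => friedmannRHS m c κt C σ ρ₀ ν p μ x * exp (2 * γ * x))
      atBot atTop := fun h => not_tendsto_nhds_of_tendsto_atTop (h.comp hg) L hlim
  rcases lt_trichotomy (γ + 1) p with hp | hp | hp
  · exact absurd (tendsto_friedmannRHS_mul_exp_atTop_of_add_one_lt hm.le hC hρ₀ hγ hμ hp) not_atTop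
  · refine ⟨hp, (not_lt.1 fun hlt => not_atTop ?_).lt_of_ne hν.symm⟩
    exact tendsto_friedmannRHS_mul_exp_atTop_of_two_mul_lt hm hγ
      (tendsto_add_exp_sub_of_eq_zero (by linarith) hμ (by linarith)) hlt
  · rcases hν.lt_or_gt with hlt | hgt
    · exact absurd (tendsto_friedmannRHS_mul_exp_atTop_of_two_mul_lt hm hγ
        (tendsto_add_exp_sub_of_pos (by linarith) hμ (by linarith)) hlt) not_atTop
    · exact absurd (tendsto_nhds_unique hlim
        ((tendsto_friedmannRHS_mul_exp_zero_of_lt_add_one hγ hμ hp hgt).comp hg)) hL.ne'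

end RescaledFriedmann

theorem classB_gamma_noncritical_general
    (n : ℕ) (hn : 3 ≤ n)
    (m Λ κt κ σ ω₀ ρ₀ : ℝ)
    (hm : 0 < m)
    (hκ : κ ≠ 0) (hρ₀ : 0 < ρ₀)
    (μt : ℝ → ℝ)
    (hμt0 : Filter.Tendsto μt Filter.atBot (nhds 0))
    (a : ℝ) (ha : 0 < a) (f : ℝ → ℝ)
    (hfb : Filter.Tendsto f (nhdsWithin 0 (Set.Iio 0)) Filter.atBot)
    (hFried : ∀ τ ∈ Set.Ioo (-a) (0:ℝ),
      (deriv f τ) ^ 2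
        = m * Real.exp (-((n : ℝ) - 1) * f τ)
          + (2 * Λ / ((n : ℝ) * ((n : ℝ) + 1))) * Real.exp (2 * f τ) - κt
          + (κ ^ 2 / (n : ℝ) ^ 2)
            * (σ + ρ₀ * Real.exp (-((n : ℝ) + ω₀) * f τ - μt (f τ))) ^ 2
            * Real.exp (2 * f τ))
    (γ : ℝ) (hγ : 0 < γ) (hγne : γ ≠ ((n : ℝ) - 1) / 2) :
    ((∃ mt : ℝ, 0 < mt
        ∧ Filter.Tendsto (fun τ => (deriv f τ) ^ 2 * Real.exp (2 * γ * f τ))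
            (nhdsWithin 0 (Set.Iio 0)) (nhds mt))
      ↔ (γ = (n : ℝ) + ω₀ - 1 ∧ -((n : ℝ) - 1) / 2 < ω₀))
    ∧ ((γ = (n : ℝ) + ω₀ - 1 ∧ -((n : ℝ) - 1) / 2 < ω₀) →
        Filter.Tendsto (fun τ => (deriv f τ) ^ 2 * Real.exp (2 * γ * f τ))
          (nhdsWithin 0 (Set.Iio 0)) (nhds (κ ^ 2 / (n : ℝ) ^ 2 * ρ₀ ^ 2))) := by
  have hC : 0 < κ ^ 2 / (n : ℝ) ^ 2 := by positivity
  have hlhs : (fun τ => deriv f τ ^ 2 * exp (2 * γ * f τ)) =ᶠ[𝓝[<] 0] fun τ =>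
      friedmannRHS m (2 * Λ / ((n : ℝ) * ((n : ℝ) + 1))) κt (κ ^ 2 / (n : ℝ) ^ 2) σ ρ₀
        ((n : ℝ) - 1) ((n : ℝ) + ω₀) μt (f τ) * exp (2 * γ * f τ) := by
    filter_upwards [Ioo_mem_nhdsLT (by linarith : -a < 0)] with τ hτ
    rw [hFried τ hτ]
    rfl
  have hparams : (γ = (n : ℝ) + ω₀ - 1 ∧ -((n : ℝ) - 1) / 2 < ω₀)
      ↔ γ + 1 = (n : ℝ) + ω₀ ∧ (n : ℝ) - 1 < 2 * γ := by
    constructor <;> rintro ⟨h₁, h₂⟩ <;> constructor <;> linarith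
  simp_rw [hparams, tendsto_congr' hlhs]
  refine ⟨exists_pos_tendsto_friedmannRHS_mul_exp_iff hfb hm hC hρ₀ hγ hμt0
    (fun h => hγne (by linarith)), fun ⟨hp, hν⟩ =>
      (tendsto_friedmannRHS_mul_exp_of_add_one_eq hγ hμt0 hp hν).comp hfb⟩

/-- For `γ > 0`, `γ ≠ (n-1)/2`, a brane scale function is of class (B) with constant
`γ` (i.e. `f'² e^{2γf}` converges to a positive limit as `τ → 0⁻`) iff
`γ = n + ω₀ - 1` and `ω₀ > -(n-1)/2`; in that case the mass is `(κ²/n²) ρ₀²`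
(and the tension `σ ∈ ℝ` is arbitrary). -/
theorem classB_gamma_noncritical
    (n : ℕ) (hn : 3 ≤ n)
    (m Λ κt κ σ ω₀ ρ₀ : ℝ)
    (hm : 0 < m) (hΛ : Λ ≤ 0)
    (hκt : κt = -1 ∨ κt = 0 ∨ κt = 1) (hΛκt : Λ = 0 → κt = 1)
    (hκ : κ ≠ 0) (hρ₀ : 0 < ρ₀)
    (lam μt : ℝ → ℝ)
    (hlam : ContDiff ℝ (⊤ : ℕ∞) lam)
    (hlam0 : Filter.Tendsto lam Filter.atBot (nhds 0))
    (hμt : ∀ t : ℝ, HasDerivAt μt (lam t) t)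
    (hμt0 : Filter.Tendsto μt Filter.atBot (nhds 0))
    (a : ℝ) (ha : 0 < a) (f : ℝ → ℝ)
    (hf : ContDiffOn ℝ (⊤ : ℕ∞) f (Set.Ioo (-a) 0))
    (hf' : ∀ τ ∈ Set.Ioo (-a) (0:ℝ), deriv f τ < 0)
    (hfb : Filter.Tendsto f (nhdsWithin 0 (Set.Iio 0)) Filter.atBot)
    (hFried : ∀ τ ∈ Set.Ioo (-a) (0:ℝ),
      (deriv f τ) ^ 2
        = m * Real.exp (-((n : ℝ) - 1) * f τ)
          + (2 * Λ / ((n : ℝ) * ((n : ℝ) + 1))) * Real.exp (2 * f τ) - κt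
          + (κ ^ 2 / (n : ℝ) ^ 2)
            * (σ + ρ₀ * Real.exp (-((n : ℝ) + ω₀) * f τ - μt (f τ))) ^ 2
            * Real.exp (2 * f τ))
    (γ : ℝ) (hγ : 0 < γ) (hγne : γ ≠ ((n : ℝ) - 1) / 2) :
    ((∃ mt : ℝ, 0 < mt
        ∧ Filter.Tendsto (fun τ => (deriv f τ) ^ 2 * Real.exp (2 * γ * f τ))
            (nhdsWithin 0 (Set.Iio 0)) (nhds mt))
      ↔ (γ = (n : ℝ) + ω₀ - 1 ∧ -((n : ℝ) - 1) / 2 < ω₀))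
    ∧ ((γ = (n : ℝ) + ω₀ - 1 ∧ -((n : ℝ) - 1) / 2 < ω₀) →
        Filter.Tendsto (fun τ => (deriv f τ) ^ 2 * Real.exp (2 * γ * f τ))
          (nhdsWithin 0 (Set.Iio 0)) (nhds (κ ^ 2 / (n : ℝ) ^ 2 * ρ₀ ^ 2))) :=
  classB_gamma_noncritical_general n hn m Λ κt κ σ ω₀ ρ₀ hm hκ hρ₀ μt hμt0 a ha f hfb hFried γ hγ
    hγne
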